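/- Given a continuous Γ : J → M_n(ℝ), there exists exactly one two-parameter family H : J × J → GL(n,ℝ), differentiable in each argument, satisfying H(t,r) = H(t,s)H(s,r), H(s,s) = I, and ∂H(s,t)/∂t|_{t=s} = Γ(s) for all r,s,t ∈ J. -/

import Mathlib

/-!
Fix `t`. Differentiating `H t u = H t s * H s u` in `u` at `u = s` shows that `u ↦ H t u` solves
the linear equation `X' = X Γ(u)` with `X t = 1`, so uniqueness for this equation on the
connected set `J` gives uniqueness of `H`. Conversely, let `H t` be the solution with `H t t = 1`:
both sides of `H t r = H t s * H s r` solve the equation in `r` and agree at `r = s`, so they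
coincide; hence `H t s * H s t = H t t = 1`, and `H u b = (H b u)⁻¹` is differentiable in `u`.
Solutions exist on all of `J` because the equation is linear: on a compact subinterval the
Picard–Lindelöf theorem provides solutions on steps of a fixed length, which are glued together.
-/

open Set Filter Topology
open scoped NNReal

section LinearGrowth

variable {E : Type*} [NormedAddCommGroup E] [NormedSpace ℝ E]
  {v : ℝ → E → E} {f g : ℝ → E} {a b c : ℝ}

theorem IsIntegralCurveOn.piecewise_Icc (hf : IsIntegralCurveOn f v (Icc a c))
    (hg : IsIntegralCurveOn g v (Icc c b)) (hfg : f c = g c) (hac : a ≤ c) (hcb : c ≤ b) :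
    IsIntegralCurveOn (fun t ↦ if t ≤ c then f t else g t) v (Icc a b) := by
  set F : ℝ → E := fun t ↦ if t ≤ c then f t else g t
  have hFf : EqOn F f (Icc a c) := fun t ht ↦ if_pos ht.2
  have hFg : EqOn F g (Icc c b) := fun t ht ↦ by
    rcases ht.1.eq_or_lt with rfl | hlt
    · simp [F, hfg]
    · exact if_neg hlt.not_ge
  have hF₁ : IsIntegralCurveOn F v (Icc a c) := fun t ht ↦ by
    simpa only [hFf ht] using (hf t ht).congr hFf (hFf ht)
  have hF₂ : IsIntegralCurveOn F v (Icc c b) := fun t ht ↦ by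
    simpa only [hFg ht] using (hg t ht).congr hFg (hFg ht)
  -- at a point outside a closed piece, the derivative within that piece holds vacuously
  have onPiece {s : Set ℝ} (hs : IsClosed s) (hF : IsIntegralCurveOn F v s) (t : ℝ) :
      HasDerivWithinAt F (v t (F t)) s t := by
    by_cases ht : t ∈ s
    · exact hF t ht
    · exact HasFDerivWithinAt.of_notMem_closure (hs.closure_eq.symm ▸ ht)
  rw [← Icc_union_Icc_eq_Icc hac hcb]
  exact fun t _ ↦ (onPiece isClosed_Icc hF₁ t).union (onPiece isClosed_Icc hF₂ t)

variable [CompleteSpace E] {K : ℝ≥0}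

theorem exists_isIntegralCurveOn_Icc_of_two_mul_le (hlip : ∀ t, LipschitzWith K (v t))
    (hcont : ∀ x, Continuous (v · x)) (h0 : ∀ t, v t 0 = 0) (hab : a ≤ b)
    (hK : 2 * K * (b - a) ≤ 1) (x₀ : E) :
    ∃ f : ℝ → E, f a = x₀ ∧ IsIntegralCurveOn f v (Icc a b) := by
  have hnorm (t : ℝ) (x : E) : ‖v t x‖ ≤ K * ‖x‖ := by
    simpa [h0, dist_eq_norm] using (hlip t).dist_le_mul x 0
  -- on the ball of radius `‖x₀‖ + 1` about `x₀` the field is bounded by `2K(‖x₀‖ + 1)`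
  have hPL : IsPicardLindelof v (⟨a, left_mem_Icc.2 hab⟩ : Icc a b) x₀ (‖x₀‖₊ + 1) 0
      (2 * K * (‖x₀‖₊ + 1)) K :=
    { lipschitzOnWith := fun t _ ↦ (hlip t).lipschitzOnWith
      continuousOn := fun x _ ↦ (hcont x).continuousOn
      norm_le := fun t _ x hx ↦ by
        have hx' : ‖x‖ ≤ 2 * ‖x₀‖ + 1 := by
          have := norm_le_norm_add_norm_sub' x x₀
          have := mem_closedBall_iff_norm.1 hx
          push_cast at this
          linarith
        calc ‖v t x‖ ≤ K * ‖x‖ := hnorm t x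
          _ ≤ K * (2 * ‖x₀‖ + 1) := by gcongr
          _ ≤ _ := by push_cast; nlinarith [K.2]
      mul_max_le := by
        simp only [sub_self, max_eq_left (sub_nonneg.2 hab), NNReal.coe_zero, sub_zero]
        push_cast
        nlinarith [norm_nonneg x₀] }
  exact hPL.exists_eq_forall_mem_Icc_hasDerivWithinAt₀

theorem exists_isIntegralCurveOn_Icc_left (hlip : ∀ t, LipschitzWith K (v t))
    (hcont : ∀ x, Continuous (v · x)) (h0 : ∀ t, v t 0 = 0) (x₀ : E) :
    ∃ f : ℝ → E, f a = x₀ ∧ IsIntegralCurveOn f v (Icc a b) := by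
  -- Picard–Lindelöf gives solutions on every interval of length `δ`, whatever the initial value.
  set δ : ℝ := 1 / (2 * K + 1)
  have hδ : 0 < δ := by positivity
  have hKδ : 2 * K * δ ≤ 1 := by
    rw [mul_one_div, div_le_one (by positivity)]
    linarith
  have steps (N : ℕ) : ∃ f : ℝ → E, f a = x₀ ∧ IsIntegralCurveOn f v (Icc a (a + N * δ)) := by
    induction N with
    | zero =>
      simpa using exists_isIntegralCurveOn_Icc_of_two_mul_le hlip hcont h0 le_rfl (by simp) x₀
    | succ N ih =>
      obtain ⟨f, hfa, hf⟩ := ih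
      obtain ⟨g, hgc, hg⟩ := exists_isIntegralCurveOn_Icc_of_two_mul_le hlip hcont h0
        (a := a + N * δ) (b := a + (N + 1 : ℕ) * δ) (by push_cast; linarith)
        (by push_cast; linarith) (f (a + N * δ))
      have hN : a ≤ a + N * δ := le_add_of_nonneg_right (by positivity)
      exact ⟨_, (if_pos hN).trans hfa, hf.piecewise_Icc hg hgc.symm hN (by push_cast; linarith)⟩
  obtain ⟨N, hN⟩ := exists_nat_ge ((b - a) / δ)
  obtain ⟨f, hfa, hf⟩ := steps N
  refine ⟨f, hfa, hf.mono (Icc_subset_Icc_right ?_)⟩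
  rw [div_le_iff₀ hδ] at hN
  linarith

theorem exists_isIntegralCurveOn_Icc_right (hlip : ∀ t, LipschitzWith K (v t))
    (hcont : ∀ x, Continuous (v · x)) (h0 : ∀ t, v t 0 = 0) (x₀ : E) :
    ∃ f : ℝ → E, f b = x₀ ∧ IsIntegralCurveOn f v (Icc a b) := by
  obtain ⟨g, hgb, hg⟩ := exists_isIntegralCurveOn_Icc_left (v := fun t x ↦ -v (-t) x) (b := -a)
    (fun t ↦ (hlip (-t)).neg) (fun x ↦ ((hcont x).comp continuous_neg).neg) (by simp [h0]) x₀
  refine ⟨g ∘ (· * -1), by simpa using hgb, ?_⟩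
  convert hg.comp_mul (-1) using 1
  · ext t x
    simp
  · ext t
    simp [and_comm]

theorem exists_isIntegralCurveOn_Icc (hlip : ∀ t, LipschitzWith K (v t))
    (hcont : ∀ x, Continuous (v · x)) (h0 : ∀ t, v t 0 = 0) (hc : c ∈ Icc a b) (x₀ : E) :
    ∃ f : ℝ → E, f c = x₀ ∧ IsIntegralCurveOn f v (Icc a b) := by
  obtain ⟨f, hfc, hf⟩ := exists_isIntegralCurveOn_Icc_right hlip hcont h0 x₀
  obtain ⟨g, hgc, hg⟩ := exists_isIntegralCurveOn_Icc_left hlip hcont h0 x₀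
  exact ⟨_, by simp [hfc], hf.piecewise_Icc hg (hfc.trans hgc.symm) hc.1 hc.2⟩

end LinearGrowth

theorem ODE_solution_unique_of_isPreconnected {E : Type*} [NormedAddCommGroup E]
    [NormedSpace ℝ E] {v : ℝ → E → E} {f g : ℝ → E} {J : Set ℝ} {s : ℝ}
    (hJ : IsOpen J) (hJc : IsPreconnected J)
    (hv : ∀ t ∈ J, ∃ K, ∀ᶠ u in 𝓝 t, LipschitzWith K (v u))
    (hf : ∀ t ∈ J, HasDerivAt f (v t (f t)) t) (hg : ∀ t ∈ J, HasDerivAt g (v t (g t)) t)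
    (hs : s ∈ J) (heq : f s = g s) : EqOn f g J := by
  have hlocal : ∀ t ∈ J, f t = g t → f =ᶠ[𝓝 t] g := fun t ht h ↦ by
    obtain ⟨K, hK⟩ := hv t ht
    have hJt : ∀ᶠ u in 𝓝 t, u ∈ J := hJ.mem_nhds ht
    exact ODE_solution_unique_of_eventually (s := fun _ ↦ univ)
      (hK.mono fun u hu ↦ hu.lipschitzOnWith) (hJt.mono fun u hu ↦ ⟨hf u hu, trivial⟩)
      (hJt.mono fun u hu ↦ ⟨hg u hu, trivial⟩) h
  -- the set where `f` and `g` agree near the point is open, and closed in `J`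
  set U : Set ℝ := {t | f =ᶠ[𝓝 t] g}
  have hsub : J ⊆ U := by
    refine hJc.subset_of_closure_inter_subset (u := U) isOpen_setOfPred_eventually_nhds
      ⟨s, hs, hlocal s hs heq⟩ fun t ⟨htU, htJ⟩ ↦ hlocal t htJ ?_
    have : (𝓝[U] t).NeBot := mem_closure_iff_nhdsWithin_neBot.1 htU
    exact tendsto_nhds_unique_of_eventuallyEq (l := 𝓝[U] t)
      (hf t htJ).continuousAt.continuousWithinAt (hg t htJ).continuousAt.continuousWithinAt
      (eventually_nhdsWithin_of_forall fun u (hu : f =ᶠ[𝓝 u] g) ↦ hu.eq_of_nhds)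
  exact fun t ht ↦ (hsub ht).eq_of_nhds

theorem IsOpen.exists_Icc_subset {J : Set ℝ} (hJ : IsOpen J) (hJc : IsPreconnected J) {s t : ℝ}
    (hs : s ∈ J) (ht : t ∈ J) : ∃ a b, Icc a b ⊆ J ∧ s ∈ Ioo a b ∧ t ∈ Ioo a b := by
  obtain ⟨ε, hε, hεJ⟩ := Metric.isOpen_iff.1 hJ (min s t) (min_rec' (· ∈ J) hs ht)
  obtain ⟨δ, hδ, hδJ⟩ := Metric.isOpen_iff.1 hJ (max s t) (max_rec' (· ∈ J) hs ht)
  rw [Real.ball_eq_Ioo] at hεJ hδJ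
  have := min_le_left s t
  have := min_le_right s t
  have := le_max_left s t
  have := le_max_right s t
  exact ⟨min s t - ε / 2, max s t + δ / 2,
    hJc.ordConnected.out (hεJ ⟨by linarith, by linarith⟩) (hδJ ⟨by linarith, by linarith⟩),
    ⟨by linarith, by linarith⟩, ⟨by linarith, by linarith⟩⟩

theorem lipschitzWith_mul_right {R : Type*} [SeminormedRing R] (a : R) :
    LipschitzWith ‖a‖₊ (· * a) :=
  LipschitzWith.of_dist_le_mul fun x y ↦ by
    rw [dist_eq_norm, dist_eq_norm, ← sub_mul, mul_comm (‖a‖₊ : ℝ)]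
    exact norm_mul_le _ _

section RightMul

variable {R : Type*} [NormedRing R] [NormedAlgebra ℝ R] {Γ : ℝ → R} {J : Set ℝ}

theorem eqOn_of_hasDerivAt_mul_right (hJ : IsOpen J) (hJc : IsPreconnected J)
    (hΓ : ContinuousOn Γ J) {f g : ℝ → R} (hf : ∀ t ∈ J, HasDerivAt f (f t * Γ t) t)
    (hg : ∀ t ∈ J, HasDerivAt g (g t * Γ t) t) {s : ℝ} (hs : s ∈ J) (heq : f s = g s) :
    EqOn f g J := by
  refine ODE_solution_unique_of_isPreconnected (v := fun t x ↦ x * Γ t) hJ hJc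
    (fun t ht ↦ ⟨‖Γ t‖₊ + 1, ?_⟩) hf hg hs heq
  have hΓt : ContinuousAt (fun u ↦ ‖Γ u‖₊) t := (hΓ.continuousAt (hJ.mem_nhds ht)).nnnorm
  filter_upwards [hΓt.eventually (gt_mem_nhds (lt_add_one _))] with u hu
  exact (lipschitzWith_mul_right (Γ u)).weaken hu.le

variable [CompleteSpace R]

theorem exists_isIntegralCurveOn_mul_right_Icc {a b s : ℝ} (hΓ : ContinuousOn Γ (Icc a b))
    (hs : s ∈ Icc a b) (x₀ : R) :
    ∃ f : ℝ → R, f s = x₀ ∧ IsIntegralCurveOn f (fun t x ↦ x * Γ t) (Icc a b) := by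
  have hab : a ≤ b := hs.1.trans hs.2
  -- freeze `Γ` outside `[a, b]`, which makes the equation globally Lipschitz
  set Γ' : ℝ → R := fun t ↦ Γ (projIcc a b hab t)
  have hΓ' : Continuous Γ' :=
    hΓ.comp_continuous (continuous_subtype_val.comp continuous_projIcc) fun t ↦ Subtype.prop _
  obtain ⟨C, hC⟩ := isCompact_Icc.exists_bound_of_continuousOn hΓ
  have hlip (t : ℝ) : LipschitzWith C.toNNReal (· * Γ' t) :=
    (lipschitzWith_mul_right _).weaken (by
      rw [← NNReal.coe_le_coe, coe_nnnorm]
      exact (hC _ (Subtype.prop _)).trans (le_max_left _ _))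
  obtain ⟨f, hfs, hf⟩ := exists_isIntegralCurveOn_Icc (v := fun t x ↦ x * Γ' t) hlip
    (fun x ↦ continuous_const.mul hΓ') (fun _ ↦ zero_mul _) hs x₀
  refine ⟨f, hfs, fun t ht ↦ ?_⟩
  simpa [Γ', projIcc_of_mem hab ht] using hf t ht

theorem exists_hasDerivAt_mul_right (hJ : IsOpen J) (hJc : IsPreconnected J)
    (hΓ : ContinuousOn Γ J) {s : ℝ} (hs : s ∈ J) (x₀ : R) :
    ∃ f : ℝ → R, f s = x₀ ∧ ∀ t ∈ J, HasDerivAt f (f t * Γ t) t := by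
  have hlocal : ∀ t ∈ J, ∃ a b, Ioo a b ⊆ J ∧ s ∈ Ioo a b ∧ t ∈ Ioo a b ∧
      ∃ f : ℝ → R, f s = x₀ ∧ ∀ u ∈ Ioo a b, HasDerivAt f (f u * Γ u) u := by
    intro t ht
    obtain ⟨a, b, habJ, hsab, htab⟩ := hJ.exists_Icc_subset hJc hs ht
    obtain ⟨f, hfs, hf⟩ :=
      exists_isIntegralCurveOn_mul_right_Icc (hΓ.mono habJ) (Ioo_subset_Icc_self hsab) x₀
    exact ⟨a, b, Ioo_subset_Icc_self.trans habJ, hsab, htab, f, hfs,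
      fun u hu ↦ (hf u (Ioo_subset_Icc_self hu)).hasDerivAt (Icc_mem_nhds hu.1 hu.2)⟩
  choose! a b habJ hsab htab f hfs hf using hlocal
  have hagree : ∀ t ∈ J, ∀ u ∈ J, EqOn (f t) (f u) (Ioo (a t) (b t) ∩ Ioo (a u) (b u)) := by
    intro t ht u hu
    have hI : IsPreconnected (Ioo (a t) (b t) ∩ Ioo (a u) (b u)) :=
      (Ioo_inter_Ioo (a₁ := a t)).symm ▸ isPreconnected_Ioo
    exact eqOn_of_hasDerivAt_mul_right (isOpen_Ioo.inter isOpen_Ioo) hI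
      (hΓ.mono (inter_subset_left.trans (habJ t ht))) (fun v hv ↦ hf t ht v hv.1)
      (fun v hv ↦ hf u hu v hv.2) ⟨hsab t ht, hsab u hu⟩ ((hfs t ht).trans (hfs u hu).symm)
  refine ⟨fun t ↦ f t t, hfs s hs, fun t ht ↦ ?_⟩
  have hnear : (fun u ↦ f u u) =ᶠ[𝓝 t] f t := by
    filter_upwards [isOpen_Ioo.mem_nhds (htab t ht)] with u hu
    exact (hagree t ht u (habJ t ht hu) ⟨hu, htab u (habJ t ht hu)⟩).symm
  exact (hf t ht t (htab t ht)).congr_of_eventuallyEq hnear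

end RightMul

structure IsPropagator {R : Type*} [NormedRing R] [NormedAlgebra ℝ R] (Γ : ℝ → R) (J : Set ℝ)
    (H : ℝ → ℝ → R) : Prop where
  mul_eq : ∀ r ∈ J, ∀ s ∈ J, ∀ t ∈ J, H t r = H t s * H s r
  self_eq_one : ∀ s ∈ J, H s s = 1
  hasDerivAt_self : ∀ s ∈ J, HasDerivAt (H s) (Γ s) s

namespace IsPropagator

variable {R : Type*} [NormedRing R] [NormedAlgebra ℝ R] {Γ : ℝ → R} {J : Set ℝ}
  {H : ℝ → ℝ → R}

theorem mul_eq_one (hH : IsPropagator Γ J H) {s t : ℝ} (hs : s ∈ J) (ht : t ∈ J) :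
    H t s * H s t = 1 := by
  rw [← hH.mul_eq t ht s hs t ht, hH.self_eq_one t ht]

theorem isUnit (hH : IsPropagator Γ J H) {s t : ℝ} (hs : s ∈ J) (ht : t ∈ J) : IsUnit (H t s) :=
  ⟨⟨H t s, H s t, hH.mul_eq_one hs ht, hH.mul_eq_one ht hs⟩, rfl⟩

theorem hasDerivAt (hH : IsPropagator Γ J H) (hJ : IsOpen J) {t u : ℝ} (ht : t ∈ J)
    (hu : u ∈ J) : HasDerivAt (H t) (H t u * Γ u) u := by
  have hnear : H t =ᶠ[𝓝 u] fun v ↦ H t u * H u v := by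
    filter_upwards [hJ.mem_nhds hu] with v hv using hH.mul_eq v hv u hu t ht
  exact ((hH.hasDerivAt_self u hu).const_mul (H t u)).congr_of_eventuallyEq hnear

theorem differentiableAt_left [CompleteSpace R] (hH : IsPropagator Γ J H) (hJ : IsOpen J)
    {a b : ℝ} (ha : a ∈ J) (hb : b ∈ J) : DifferentiableAt ℝ (fun u ↦ H u b) a := by
  have hnear : (fun u ↦ H u b) =ᶠ[𝓝 a] fun u ↦ Ring.inverse (H b u) := by
    filter_upwards [hJ.mem_nhds ha] with u hu
    exact (Ring.inverse_unit ⟨H b u, H u b, hH.mul_eq_one hu hb, hH.mul_eq_one hb hu⟩).symm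
  exact ((differentiableAt_inverse (hH.isUnit ha hb)).comp a
    (hH.hasDerivAt hJ hb ha).differentiableAt).congr_of_eventuallyEq hnear

theorem unique (hH : IsPropagator Γ J H) {H' : ℝ → ℝ → R} (hH' : IsPropagator Γ J H')
    (hJ : IsOpen J) (hJc : IsPreconnected J) (hΓ : ContinuousOn Γ J) {s t : ℝ} (hs : s ∈ J)
    (ht : t ∈ J) : H' t s = H t s :=
  eqOn_of_hasDerivAt_mul_right hJ hJc hΓ (fun _ hu ↦ hH'.hasDerivAt hJ ht hu)
    (fun _ hu ↦ hH.hasDerivAt hJ ht hu) ht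
    ((hH'.self_eq_one t ht).trans (hH.self_eq_one t ht).symm) hs

end IsPropagator

theorem exists_isPropagator {R : Type*} [NormedRing R] [NormedAlgebra ℝ R] [CompleteSpace R]
    {Γ : ℝ → R} {J : Set ℝ} (hJ : IsOpen J) (hJc : IsPreconnected J) (hΓ : ContinuousOn Γ J) :
    ∃ H, IsPropagator Γ J H := by
  choose! H hH₁ hH using fun s (hs : s ∈ J) ↦ exists_hasDerivAt_mul_right hJ hJc hΓ hs 1
  refine ⟨H, ⟨fun r hr s hs t ht ↦ ?_, hH₁, fun s hs ↦ ?_⟩⟩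
  · refine eqOn_of_hasDerivAt_mul_right (g := fun u ↦ H t s * H s u) hJ hJc hΓ (hH t ht)
      (fun u hu ↦ by simpa only [mul_assoc] using (hH s hs u hu).const_mul (H t s)) hs ?_ hr
    rw [hH₁ s hs, mul_one]
  · simpa only [hH₁ s hs, one_mul] using hH s hs s hs

section LinftyOp

attribute [local instance] Matrix.linftyOpNormedAddCommGroup Matrix.linftyOpNormedSpace

variable {m n : Type*} [Fintype n] {f : ℝ → Matrix m n ℝ} {x : ℝ}

theorem Matrix.linftyOp_hasDerivAt_iff {f' : Matrix m n ℝ} :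
    HasDerivAt f f' x ↔ ∀ i j, HasDerivAt (fun t ↦ f t i j) (f' i j) x :=
  hasDerivAt_pi.trans (forall_congr' fun _ ↦ hasDerivAt_pi)

theorem Matrix.linftyOp_differentiableAt_iff :
    DifferentiableAt ℝ f x ↔ ∀ i j, DifferentiableAt ℝ (fun t ↦ f t i j) x :=
  differentiableAt_pi.trans (forall_congr' fun _ ↦ differentiableAt_pi)

end LinftyOp

/-- Given continuous `Γ : J → M_n(ℝ)`, there is exactly one two-parameter family
`H : J × J → GL(n,ℝ)`, differentiable in each argument, with
`H t r = H t s * H s r`, `H s s = 1` and `∂H(s,t)/∂t|_{t=s} = Γ s`.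
(Uniqueness is uniqueness of the values `H t s` for `s, t ∈ J`.) -/
theorem stmt_11 (n : ℕ) (J : Set ℝ) (hJ : IsOpen J) (hJc : IsPreconnected J)
    (Γ : ℝ → Matrix (Fin n) (Fin n) ℝ)
    (hΓ : ∀ i j, ContinuousOn (fun s => Γ s i j) J) :
    ∃ H : ℝ → ℝ → Matrix (Fin n) (Fin n) ℝ,
      ((∀ s ∈ J, ∀ t ∈ J, IsUnit (H t s)) ∧
       (∀ a ∈ J, ∀ b ∈ J, ∀ i j, DifferentiableAt ℝ (fun u => H u b i j) a ∧
          DifferentiableAt ℝ (fun u => H a u i j) b) ∧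
       (∀ r ∈ J, ∀ s ∈ J, ∀ t ∈ J, H t r = H t s * H s r) ∧
       (∀ s ∈ J, H s s = 1) ∧
       (∀ s ∈ J, ∀ i j, HasDerivAt (fun t => H s t i j) (Γ s i j) s)) ∧
      ∀ H' : ℝ → ℝ → Matrix (Fin n) (Fin n) ℝ,
        ((∀ s ∈ J, ∀ t ∈ J, IsUnit (H' t s)) ∧
         (∀ a ∈ J, ∀ b ∈ J, ∀ i j, DifferentiableAt ℝ (fun u => H' u b i j) a ∧
            DifferentiableAt ℝ (fun u => H' a u i j) b) ∧
         (∀ r ∈ J, ∀ s ∈ J, ∀ t ∈ J, H' t r = H' t s * H' s r) ∧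
         (∀ s ∈ J, H' s s = 1) ∧
         (∀ s ∈ J, ∀ i j, HasDerivAt (fun t => H' s t i j) (Γ s i j) s)) →
        ∀ s ∈ J, ∀ t ∈ J, H' t s = H t s := by
  -- the `ℓ∞` operator norm makes square matrices a Banach algebra with the entrywise topology
  let : NormedRing (Matrix (Fin n) (Fin n) ℝ) := Matrix.linftyOpNormedRing
  let : NormedAlgebra ℝ (Matrix (Fin n) (Fin n) ℝ) := Matrix.linftyOpNormedAlgebra
  have hΓ' : ContinuousOn Γ J := continuousOn_pi.2 fun i ↦ continuousOn_pi.2 (hΓ i)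
  obtain ⟨H, hH⟩ := exists_isPropagator hJ hJc hΓ'
  refine ⟨H, ⟨fun s hs t ht ↦ hH.isUnit hs ht, fun a ha b hb i j ↦ ⟨?_, ?_⟩, hH.mul_eq,
    hH.self_eq_one, fun s hs ↦ Matrix.linftyOp_hasDerivAt_iff.1 (hH.hasDerivAt_self s hs)⟩, ?_⟩
  · exact Matrix.linftyOp_differentiableAt_iff.1 (hH.differentiableAt_left hJ ha hb) i j
  · exact Matrix.linftyOp_differentiableAt_iff.1 (hH.hasDerivAt hJ ha hb).differentiableAt i j
  · rintro H' ⟨-, -, hmul, hone, hderiv⟩ s hs t ht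
    exact hH.unique ⟨hmul, hone, fun s hs ↦ Matrix.linftyOp_hasDerivAt_iff.2 (hderiv s hs)⟩
      hJ hJc hΓ' hs ht
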